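/- If x₁, x₂, ..., x_N are independent exponentially distributed random variables with rates λ₁, ..., λ_N (all positive), then Pr(x₁ ≤ x₂ + ... + x_N) = 1 - ∏_{i=2}^{N} 1/(1 + λ₁/λᵢ). -/

import Mathlib

/-!
Write `X = x₀` and `S = x₁ + ⋯ + x_{N-1}`. Since `X` is independent of `S ≥ 0` and has tail
`Pr(X > s) = exp (-λ₀ s)`, conditioning on `S` gives `Pr(S < X) = 𝔼[exp (-λ₀ S)]`, the moment
generating function of `S` at `-λ₀`. By independence it is the product of the moment generating
functions `λᵢ / (λᵢ + λ₀)` of the summands.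
-/

namespace ProbabilityTheory

open MeasureTheory Real Set

lemma expMeasure_eq_withDensity (r : ℝ) : expMeasure r = volume.withDensity (exponentialPDF r) :=
  rfl

lemma ae_nonneg_expMeasure (r : ℝ) : ∀ᵐ y ∂expMeasure r, 0 ≤ y := by
  simp only [ae_iff, not_le]
  change expMeasure r (Iio 0) = 0
  rw [expMeasure_eq_withDensity, withDensity_apply _ measurableSet_Iio]
  exact lintegral_exponentialPDF_of_nonpos le_rfl

lemma expMeasure_Ioi {r : ℝ} (hr : 0 < r) {b : ℝ} (hb : 0 ≤ b) :
    expMeasure r (Ioi b) = ENNReal.ofReal (exp (-(r * b))) := by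
  have := isProbabilityMeasure_expMeasure hr
  rw [← ofReal_measureReal, ← compl_Iic, probReal_compl_eq_one_sub measurableSet_Iic,
    ← cdf_eq_real, cdf_expMeasure_eq hr, if_pos hb, sub_sub_cancel]

lemma mgf_id_expMeasure {r t : ℝ} (hr : 0 < r) (ht : t < r) :
    mgf id (expMeasure r) t = r / (r - t) := by
  have hdensity : ∀ y, (exponentialPDF r y).toReal • exp (t * y)
      = (Ici 0).indicator (fun y ↦ r * exp ((t - r) * y)) y := by
    intro y
    rcases le_or_gt 0 y with hy | hy
    · rw [exponentialPDF_of_nonneg hy, indicator_of_mem (mem_Ici.2 hy),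
        ENNReal.toReal_ofReal (by positivity), smul_eq_mul, mul_assoc, ← exp_add]
      ring_nf
    · rw [exponentialPDF_of_neg hy, indicator_of_notMem (by simpa using hy)]
      simp
  simp only [mgf, id_eq]
  rw [expMeasure_eq_withDensity,
    integral_withDensity_eq_integral_toReal_smul (f := exponentialPDF r)
      (measurable_exponentialPDFReal r).ennreal_ofReal
      (ae_of_all _ fun _ ↦ ENNReal.ofReal_lt_top),
    integral_congr_ae (ae_of_all _ fun y ↦ hdensity y), integral_indicator measurableSet_Ici,
    integral_Ici_eq_integral_Ioi, integral_const_mul, integral_exp_mul_Ioi (by linarith),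
    mul_zero, exp_zero, ← neg_sub r t, div_neg, neg_div, neg_neg, mul_one_div]

variable {Ω : Type*} [MeasurableSpace Ω] {μ : Measure Ω}

lemma ae_nonneg_of_map_eq_expMeasure {X : Ω → ℝ} (hX : Measurable X) {r : ℝ}
    (h : μ.map X = expMeasure r) : ∀ᵐ ω ∂μ, 0 ≤ X ω :=
  ae_of_ae_map hX.aemeasurable (h ▸ ae_nonneg_expMeasure r)

lemma measure_lt_of_indepFun_of_map_eq_expMeasure [IsFiniteMeasure μ] {X Y : Ω → ℝ}
    (hX : Measurable X) (hY : Measurable Y) (hXY : IndepFun X Y μ) {r : ℝ} (hr : 0 < r)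
    (hXr : μ.map X = expMeasure r) (hY₀ : ∀ᵐ ω ∂μ, 0 ≤ Y ω) :
    μ {ω | Y ω < X ω} = ENNReal.ofReal (mgf Y μ (-r)) := by
  have hset : MeasurableSet {p : ℝ × ℝ | p.2 < p.1} := measurableSet_lt measurable_snd measurable_fst
  have hint : Integrable (fun ω ↦ exp (-r * Y ω)) μ := by
    refine .of_bound (by fun_prop) 1 ?_
    filter_upwards [hY₀] with ω hω
    rw [norm_of_nonneg (exp_pos _).le, exp_le_one_iff]
    nlinarith
  calc μ {ω | Y ω < X ω} = ((μ.map X).prod (μ.map Y)) {p | p.2 < p.1} := by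
        rw [← (indepFun_iff_map_prod_eq_prod_map_map hX.aemeasurable hY.aemeasurable).1 hXY,
          Measure.map_apply (hX.prodMk hY) hset]
        rfl
    _ = ∫⁻ b, (μ.map X) (Ioi b) ∂(μ.map Y) := Measure.prod_apply_symm hset
    _ = ∫⁻ b, ENNReal.ofReal (exp (-r * b)) ∂(μ.map Y) := by
        refine lintegral_congr_ae ?_
        filter_upwards [(ae_map_iff hY.aemeasurable measurableSet_Ici).2 hY₀] with b hb
        rw [hXr, expMeasure_Ioi hr hb, neg_mul]
    _ = ∫⁻ ω, ENNReal.ofReal (exp (-r * Y ω)) ∂μ := lintegral_map (by fun_prop) hY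
    _ = ENNReal.ofReal (mgf Y μ (-r)) :=
        (ofReal_integral_eq_lintegral_ofReal hint (ae_of_all _ fun _ ↦ (exp_pos _).le)).symm

end ProbabilityTheory

open MeasureTheory ProbabilityTheory Finset

/-- If `x 0, ..., x (N-1)` are independent exponential random variables with positive
rates `lam i`, then `Pr(x 0 ≤ ∑_{i ≠ 0} x i) = 1 - ∏_{i ≠ 0} 1/(1 + lam 0 / lam i)`. -/
theorem outage_lemma
    {Ω : Type*} [MeasurableSpace Ω] (μ : Measure Ω) [IsProbabilityMeasure μ]
    (N : ℕ) (hN : 2 ≤ N) (x : Fin N → Ω → ℝ) (lam : Fin N → ℝ)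
    (hlam : ∀ i, 0 < lam i)
    (hmeas : ∀ i, Measurable (x i))
    (hdist : ∀ i, μ.map (x i) = expMeasure (lam i))
    (hindep : iIndepFun x μ) :
    μ {ω | x ⟨0, by omega⟩ ω ≤ ∑ i ∈ univ \ {⟨0, by omega⟩}, x i ω}
      = ENNReal.ofReal
          (1 - ∏ i ∈ univ \ {(⟨0, by omega⟩ : Fin N)},
              1 / (1 + lam ⟨0, by omega⟩ / lam i)) := by
  set i₀ : Fin N := ⟨0, by omega⟩
  set s := univ \ {i₀}
  have hS₀ : ∀ᵐ ω ∂μ, 0 ≤ (∑ i ∈ s, x i) ω := by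
    filter_upwards [ae_all_iff.2 fun i ↦ ae_nonneg_of_map_eq_expMeasure (hmeas i) (hdist i)]
      with ω hω
    simpa only [Finset.sum_apply] using Finset.sum_nonneg fun i _ ↦ hω i
  have hindep₀ : IndepFun (x i₀) (∑ i ∈ s, x i) μ :=
    (hindep.indepFun_finsetSum_of_notMem hmeas (by simp [s])).symm
  have hmgf : ∀ i ∈ s, mgf (x i) μ (-lam i₀) = 1 / (1 + lam i₀ / lam i) := by
    intro i _
    have := hlam i
    rw [← mgf_id_map (hmeas i).aemeasurable, hdist i,
      mgf_id_expMeasure (hlam i) (by linarith [hlam i₀]), sub_neg_eq_add]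
    field_simp
  have hle_compl : {ω | x i₀ ω ≤ ∑ i ∈ s, x i ω} = {ω | (∑ i ∈ s, x i) ω < x i₀ ω}ᶜ := by
    ext ω
    simp [Finset.sum_apply]
  rw [hle_compl, prob_compl_eq_one_sub (measurableSet_lt (by fun_prop) (hmeas i₀)),
    measure_lt_of_indepFun_of_map_eq_expMeasure (hmeas i₀) (by fun_prop) hindep₀ (hlam i₀)
      (hdist i₀) hS₀, hindep.mgf_sum hmeas, prod_congr rfl hmgf,
    ENNReal.ofReal_sub _ (prod_nonneg fun i hi ↦ hmgf i hi ▸ mgf_nonneg),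
    ENNReal.ofReal_one]
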